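/- arXiv:1203.2543 — 3 statements merged into one kernel-verified Lean document; each statement's English description precedes it below -/
import Mathlib

section
/- In the power of a path P_n^k with k + 2 ≤ n ≤ 2k, the vertex set {v_0, v_k, v_{k+1}} is a biclique (a maximal induced complete bipartite subgraph with an edge), and for any two indices i, j with n - 1 - k ≤ i < j ≤ k, the pair {v_i, v_j} is also a biclique. -/
open SimpleGraph

/-- The `k`-th power of a path on `n` vertices: `v_i ~ v_j` iff `0 < |i - j| ≤ k`. -/
def pathPower (n k : ℕ) : SimpleGraph (Fin n) :=
  SimpleGraph.fromRel (fun i j => i.val ≤ j.val ∧ j.val ≤ i.val + k)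

/-- The cyclic distance between two vertices of `ZMod n`. -/
def cdist (n : ℕ) (i j : ZMod n) : ℕ := min (i - j).val (j - i).val

/-- The `k`-th power of a cycle on `n` vertices: `v_i ~ v_j` iff the
cyclic distance between `i` and `j` is between `1` and `k`. -/
def cyclePower (n k : ℕ) : SimpleGraph (ZMod n) :=
  SimpleGraph.fromRel (fun i j => cdist n i j ≤ k)

/-- `S` induces a complete bipartite subgraph of `G`. -/
def IsCompleteBipartiteSet {V : Type*} (G : SimpleGraph V) (S : Set V) : Prop :=
  ∃ A B : Set V, A ∪ B = S ∧ Disjoint A B ∧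
    (∀ a ∈ A, ∀ b ∈ B, G.Adj a b) ∧
    (∀ a ∈ A, ∀ a' ∈ A, ¬ G.Adj a a') ∧
    (∀ b ∈ B, ∀ b' ∈ B, ¬ G.Adj b b')

/-- A biclique: a maximal set of vertices inducing a complete bipartite
subgraph with at least one edge. -/
def IsBiclique {V : Type*} (G : SimpleGraph V) (S : Set V) : Prop :=
  IsCompleteBipartiteSet G S ∧ (∃ u ∈ S, ∃ v ∈ S, G.Adj u v) ∧
  ∀ T : Set V, S ⊆ T → IsCompleteBipartiteSet G T → T = S

/-- A set is monochromatic under a colouring. -/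
def Monochromatic {V α : Type*} (c : V → α) (S : Set V) : Prop :=
  ∃ a, ∀ v ∈ S, c v = a

/-- `G` admits a biclique-colouring with `m` colours. -/
def BicliqueColorable {V : Type*} (G : SimpleGraph V) (m : ℕ) : Prop :=
  ∃ c : V → Fin m, ∀ S : Set V, IsBiclique G S → ¬ Monochromatic c S

/-- The biclique-chromatic number. -/
noncomputable def bicliqueChromaticNumber {V : Type*} (G : SimpleGraph V) : ℕ :=
  sInf {m | BicliqueColorable G m}

/-- `a`, `b`, `c` induce a path on three vertices (with middle vertex `b`). -/
def IsInducedP3 {V : Type*} (G : SimpleGraph V) (a b c : V) : Prop :=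
  a ≠ b ∧ b ≠ c ∧ a ≠ c ∧ G.Adj a b ∧ G.Adj b c ∧ ¬ G.Adj a c

/-- `a`, `b`, `c`, `d` induce a four-cycle (in this cyclic order). -/
def IsInducedC4 {V : Type*} (G : SimpleGraph V) (a b c d : V) : Prop :=
  a ≠ b ∧ a ≠ c ∧ a ≠ d ∧ b ≠ c ∧ b ≠ d ∧ c ≠ d ∧
  G.Adj a b ∧ G.Adj b c ∧ G.Adj c d ∧ G.Adj d a ∧ ¬ G.Adj a c ∧ ¬ G.Adj b d

/-! The vertices `v_i` with `n - 1 - k ≤ i ≤ k` are universal, and a complete bipartite set is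
triangle-free. So a vertex `w` joining a complete bipartite set that contains a universal vertex
`u` must be non-adjacent to every neighbour of `u` in it. For `{v_i, v_j}` this excludes every
`w`; for `{v_0, v_k, v_{k+1}}` it forces `w ≁ v_{k+1}`, and since `n ≤ 2k + 2` the only
non-neighbour of `v_{k+1}` besides itself is `v_0`. -/

section Bicliques

variable {V : Type*} {G : SimpleGraph V}

theorem isCompleteBipartiteSet_pair {u v : V} (huv : G.Adj u v) :
    IsCompleteBipartiteSet G {u, v} := by
  refine ⟨{u}, {v}, Set.singleton_union, ?_, ?_, ?_, ?_⟩
  · exact Set.disjoint_singleton.2 huv.ne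
  · rintro _ rfl _ rfl
    exact huv
  · rintro _ rfl _ rfl
    exact G.irrefl
  · rintro _ rfl _ rfl
    exact G.irrefl

theorem IsInducedP3.isCompleteBipartiteSet {a b c : V} (h : IsInducedP3 G a b c) :
    IsCompleteBipartiteSet G {a, b, c} := by
  obtain ⟨hab, hbc, -, hadj_ab, hadj_bc, hnadj_ac⟩ := h
  refine ⟨{b}, {a, c}, ?_, ?_, ?_, ?_, ?_⟩
  · ext w
    simp only [Set.mem_union, Set.mem_insert_iff, Set.mem_singleton_iff]
    tauto
  · simp only [Set.disjoint_singleton_left, Set.mem_insert_iff, Set.mem_singleton_iff]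
    exact fun h => h.elim (hab ∘ Eq.symm) hbc
  · rintro _ rfl w (rfl | rfl)
    exacts [hadj_ab.symm, hadj_bc]
  · rintro _ rfl _ rfl
    exact G.irrefl
  · rintro _ (rfl | rfl) _ (rfl | rfl)
    exacts [G.irrefl, hnadj_ac, fun h => hnadj_ac h.symm, G.irrefl]

theorem IsCompleteBipartiteSet.not_adj_of_adj_of_adj {T : Set V}
    (hT : IsCompleteBipartiteSet G T) {u v w : V} (hu : u ∈ T) (hv : v ∈ T) (hw : w ∈ T)
    (huv : G.Adj u v) (hvw : G.Adj v w) : ¬ G.Adj u w := by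
  obtain ⟨A, B, rfl, -, -, hA, hB⟩ := hT
  rcases hu with hu | hu <;> rcases hv with hv | hv <;> rcases hw with hw | hw
  all_goals first
    | exact hA u hu w hw
    | exact hB u hu w hw
    | exact absurd huv (hA u hu v hv)
    | exact absurd huv (hB u hu v hv)
    | exact absurd hvw (hA v hv w hw)
    | exact absurd hvw (hB v hv w hw)

theorem isBiclique_pair_of_forall_adj {u v : V} (huv : u ≠ v)
    (hu : ∀ w, w ≠ u → G.Adj w u) (hv : ∀ w, w ≠ v → G.Adj w v) :
    IsBiclique G {u, v} := by
  have hadj : G.Adj u v := hv u huv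
  refine ⟨isCompleteBipartiteSet_pair hadj, ⟨u, by simp, v, by simp, hadj⟩,
    fun T hST hT => Set.Subset.antisymm ?_ hST⟩
  intro w hw
  by_contra hne
  simp only [Set.mem_insert_iff, Set.mem_singleton_iff, not_or] at hne
  exact hT.not_adj_of_adj_of_adj hw (hST (by simp)) (hST (by simp)) (hu w hne.1) hadj
    (hv w hne.2)

theorem IsInducedP3.isBiclique {a b c : V} (h : IsInducedP3 G a b c)
    (hb : ∀ w, w ≠ b → G.Adj w b)
    (hac : ∀ w, ¬ G.Adj w a → ¬ G.Adj w c → w = a ∨ w = c) :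
    IsBiclique G {a, b, c} := by
  obtain ⟨-, -, -, hab, hbc, -⟩ := id h
  refine ⟨h.isCompleteBipartiteSet, ⟨a, by simp, b, by simp, hab⟩,
    fun T hST hT => Set.Subset.antisymm ?_ hST⟩
  intro w hw
  by_cases hwb : w = b
  · simp [hwb]
  have hb_mem : b ∈ T := hST (by simp)
  rcases hac w (hT.not_adj_of_adj_of_adj hw hb_mem (hST (by simp)) (hb w hwb) hab.symm)
      (hT.not_adj_of_adj_of_adj hw hb_mem (hST (by simp)) (hb w hwb) hbc)
    with rfl | rfl <;> simp

end Bicliques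

section PathPower

variable {n k : ℕ}

theorem pathPower_adj {x y : Fin n} :
    (pathPower n k).Adj x y ↔ x ≠ y ∧ x.val ≤ y.val + k ∧ y.val ≤ x.val + k := by
  simp only [pathPower, fromRel_adj, ne_eq, Fin.ext_iff]
  omega

theorem pathPower_adj_of_le_of_le {v w : Fin n} (hv₁ : n - 1 - k ≤ v.val) (hv₂ : v.val ≤ k)
    (hw : w ≠ v) : (pathPower n k).Adj w v := by
  have := w.isLt
  exact pathPower_adj.2 ⟨hw, by omega, by omega⟩

theorem pathPower_isInducedP3 {a b c : Fin n} (ha : a.val = 0) (hb : b.val = k)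
    (hc : c.val = k + 1) (hk : 0 < k) : IsInducedP3 (pathPower n k) a b c := by
  simp only [IsInducedP3, pathPower_adj, ne_eq, Fin.ext_iff, ha, hb, hc]
  omega

theorem pathPower_eq_or_eq_of_not_adj {a c w : Fin n} (ha : a.val = 0) (hc : c.val = k + 1)
    (hn : n ≤ 2 * k + 2) (hw : ¬ (pathPower n k).Adj w c) : w = a ∨ w = c := by
  have := w.isLt
  simp only [pathPower_adj, ne_eq, Fin.ext_iff, ha, hc] at hw ⊢
  omega

end PathPower

/-- In `P_n^k` with `k + 2 ≤ n ≤ 2k`, the set `{v_0, v_k, v_{k+1}}` is a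
biclique, and every pair `{v_i, v_j}` with `n - 1 - k ≤ i < j ≤ k` is a biclique. -/
theorem stmt_2 (n k : ℕ) (h1 : k + 2 ≤ n) (h2 : n ≤ 2 * k) :
    IsBiclique (pathPower n k)
      {(⟨0, by omega⟩ : Fin n), ⟨k, by omega⟩, ⟨k + 1, by omega⟩} ∧
    (∀ i j : Fin n, n - 1 - k ≤ i.val → i.val < j.val → j.val ≤ k →
      IsBiclique (pathPower n k) {i, j}) := by
  refine ⟨IsInducedP3.isBiclique (pathPower_isInducedP3 rfl rfl rfl (by omega)) ?_ ?_, ?_⟩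
  · exact fun w => pathPower_adj_of_le_of_le (by omega : n - 1 - k ≤ k) le_rfl
  · exact fun w _ => pathPower_eq_or_eq_of_not_adj rfl rfl (by omega)
  · intro i j hi hij hj
    exact isBiclique_pair_of_forall_adj (Fin.ne_of_lt hij)
      (fun _ => pathPower_adj_of_le_of_le hi (by omega))
      (fun _ => pathPower_adj_of_le_of_le (by omega) hj)
end

section
/- In the power of a cycle C_n^k with n ≥ 4k + 1, there is no induced 4-cycle: no set of four vertices induces a C_4. -/
open SimpleGraph

lemma cdist_comm' (n : ℕ) (i j : ZMod n) : cdist n i j = cdist n j i := by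
  unfold cdist; exact min_comm _ _

lemma exists_step' (n k : ℕ) [NeZero n] (x y : ZMod n) (hd : cdist n x y ≤ k) :
    ∃ s : ℤ, (s : ZMod n) = y - x ∧ s.natAbs ≤ k := by
  unfold cdist at hd
  rcases le_total ((y - x).val) ((x - y).val) with h' | h'
  · refine ⟨((y - x).val : ℤ), ?_, ?_⟩
    · push_cast
      rw [ZMod.natCast_val, ZMod.cast_id]
    · simp only [Int.natAbs_natCast]
      omega
  · refine ⟨-((x - y).val : ℤ), ?_, ?_⟩
    · push_cast
      rw [ZMod.natCast_val, ZMod.cast_id]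
      ring
    · simp only [Int.natAbs_neg, Int.natAbs_natCast]
      omega

lemma cdist_le_of_step' (n k : ℕ) [NeZero n] (hk : k < n) (x y : ZMod n) (s : ℤ)
    (hs : (s : ZMod n) = y - x) (habs : s.natAbs ≤ k) : cdist n x y ≤ k := by
  unfold cdist
  rcases le_or_gt 0 s with h0 | h0
  · have hcast : ((s.natAbs : ℕ) : ZMod n) = y - x := by
      have habs' : (s.natAbs : ℤ) = s := by omega
      have h2 : ((s.natAbs : ℤ) : ZMod n) = y - x := by rw [habs', hs]
      rwa [Int.cast_natCast] at h2
    have hval : (y - x).val = s.natAbs := by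
      rw [← hcast, ZMod.val_natCast, Nat.mod_eq_of_lt (by omega)]
    exact le_trans (min_le_right _ _) (by omega)
  · have hcast : ((s.natAbs : ℕ) : ZMod n) = x - y := by
      have habs' : (s.natAbs : ℤ) = -s := by omega
      have : ((s.natAbs : ℤ) : ZMod n) = x - y := by
        rw [habs', Int.cast_neg, hs]; ring
      rwa [Int.cast_natCast] at this
    have hval : (x - y).val = s.natAbs := by
      rw [← hcast, ZMod.val_natCast, Nat.mod_eq_of_lt (by omega)]
    exact le_trans (min_le_left _ _) (by omega)

/-- In `C_n^k` with `n ≥ 4k + 1`, no four vertices induce a `C_4`. -/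
theorem stmt_5 (n k : ℕ) (h : 4 * k + 1 ≤ n) :
    ∀ a b c d : ZMod n, ¬ IsInducedC4 (cyclePower n k) a b c d := by
  haveI : NeZero n := ⟨by omega⟩
  have adj_iff : ∀ x y : ZMod n, (cyclePower n k).Adj x y ↔ x ≠ y ∧ cdist n x y ≤ k := by
    intro x y
    unfold cyclePower
    rw [SimpleGraph.fromRel_adj]
    constructor
    · rintro ⟨hne, hd | hd⟩
      · exact ⟨hne, hd⟩
      · exact ⟨hne, by rw [cdist_comm']; exact hd⟩
    · rintro ⟨hne, hd⟩
      exact ⟨hne, Or.inl hd⟩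
  rintro a b c d ⟨hab, hac, had, hbc, hbd, hcd, Hab, Hbc, Hcd, Hda, Hnac, Hnbd⟩
  rw [adj_iff] at Hab Hbc Hcd Hda
  obtain ⟨s1, hs1, hs1k⟩ := exists_step' n k a b Hab.2
  obtain ⟨s2, hs2, hs2k⟩ := exists_step' n k b c Hbc.2
  obtain ⟨s3, hs3, hs3k⟩ := exists_step' n k c d Hcd.2
  obtain ⟨s4, hs4, hs4k⟩ := exists_step' n k d a Hda.2
  have hkn : k < n := by omega
  have hac' : k < (s1 + s2).natAbs := by
    by_contra h'
    push_neg at h'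
    have hcast : ((s1 + s2 : ℤ) : ZMod n) = c - a := by
      push_cast
      rw [hs1, hs2]; ring
    exact Hnac ((adj_iff a c).2 ⟨hac, cdist_le_of_step' n k hkn a c _ hcast h'⟩)
  have hbd' : k < (s2 + s3).natAbs := by
    by_contra h'
    push_neg at h'
    have hcast : ((s2 + s3 : ℤ) : ZMod n) = d - b := by
      push_cast
      rw [hs2, hs3]; ring
    exact Hnbd ((adj_iff b d).2 ⟨hbd, cdist_le_of_step' n k hkn b d _ hcast h'⟩)
  have hsum : s1 + s2 + s3 + s4 = 0 := by
    have hcast : ((s1 + s2 + s3 + s4 : ℤ) : ZMod n) = 0 := by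
      push_cast
      rw [hs1, hs2, hs3, hs4]; ring
    have hdvd : (n : ℤ) ∣ s1 + s2 + s3 + s4 :=
      (ZMod.intCast_zmod_eq_zero_iff_dvd _ n).1 hcast
    refine Int.eq_zero_of_dvd_of_natAbs_lt_natAbs hdvd ?_
    simp only [Int.natAbs_natCast]
    omega
  omega
end

section
/- The power of a cycle C_n^k with 2k + 2 ≤ n ≤ 3k + 1 has biclique-chromatic number exactly 2: colouring one block of k consecutive vertices red and the remaining n - k vertices blue leaves no biclique monochromatic. -/
open SimpleGraph

/-!
For `2k + 2 ≤ n ≤ 3k + 1`, no three vertices of `C_n^k` are pairwise non-adjacent, every edge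
extends to an induced `P₃`, and every induced `P₃` extends to an induced `C₄`. In a biclique each
side is independent, hence has at most two vertices, and a side with a single vertex could be
enlarged by one of these extensions, contradicting maximality; so every biclique contains an induced
`C₄`. The red block `{0, …, k - 1}` is a clique, so it contains no induced `C₄`, and neither do the
`n - k ≤ 2k + 1` consecutive blue vertices. Since bicliques exist, one colour does not suffice.
-/

theorem Monochromatic.mono {V α : Type*} {c : V → α} {S T : Set V} (h : Monochromatic c S)
    (hTS : T ⊆ S) : Monochromatic c T :=
  let ⟨a, ha⟩ := h
  ⟨a, fun v hv => ha v (hTS hv)⟩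

namespace SimpleGraph

variable {V : Type*} {G : SimpleGraph V}

structure IsCompleteBipartition (G : SimpleGraph V) (A B : Set V) : Prop where
  disjoint : Disjoint A B
  adj : ∀ a ∈ A, ∀ b ∈ B, G.Adj a b
  left_indep : ∀ a ∈ A, ∀ a' ∈ A, ¬ G.Adj a a'
  right_indep : ∀ b ∈ B, ∀ b' ∈ B, ¬ G.Adj b b'

theorem isCompleteBipartiteSet_iff {S : Set V} :
    IsCompleteBipartiteSet G S ↔ ∃ A B, A ∪ B = S ∧ IsCompleteBipartition G A B :=
  ⟨fun ⟨A, B, hS, hd, ha, hA, hB⟩ => ⟨A, B, hS, hd, ha, hA, hB⟩,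
    fun ⟨A, B, hS, hd, ha, hA, hB⟩ => ⟨A, B, hS, hd, ha, hA, hB⟩⟩

namespace IsCompleteBipartition

variable {A B : Set V}

theorem symm (h : IsCompleteBipartition G A B) : IsCompleteBipartition G B A :=
  ⟨h.disjoint.symm, fun b hb a ha => (h.adj a ha b hb).symm, h.right_indep, h.left_indep⟩

theorem insert_right (h : IsCompleteBipartition G A B) {z : V} (hzA : ∀ a ∈ A, G.Adj a z)
    (hzB : ∀ b ∈ B, ¬ G.Adj b z) : IsCompleteBipartition G A (insert z B) where
  disjoint := Set.disjoint_insert_right.mpr ⟨fun hz => G.irrefl (hzA z hz), h.disjoint⟩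
  adj a ha := by
    rintro b (rfl | hb)
    exacts [hzA a ha, h.adj a ha b hb]
  left_indep := h.left_indep
  right_indep := by
    rintro b (rfl | hb) b' (rfl | hb')
    exacts [G.irrefl, fun h => hzB b' hb' h.symm, hzB b hb, h.right_indep b hb b' hb']

end IsCompleteBipartition

namespace IsBiclique

variable {S A B : Set V}

theorem mem_right_of_forall_adj (hS : IsBiclique G S) (hAB : A ∪ B = S)
    (hP : IsCompleteBipartition G A B) {z : V} (hzA : ∀ a ∈ A, G.Adj a z)
    (hzB : ∀ b ∈ B, ¬ G.Adj b z) : z ∈ B := by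
  have hT : IsCompleteBipartiteSet G (insert z S) :=
    isCompleteBipartiteSet_iff.mpr
      ⟨A, insert z B, by rw [Set.union_insert, hAB], hP.insert_right hzA hzB⟩
  have hzS : z ∈ S := hS.2.2 _ (Set.subset_insert z S) hT ▸ Set.mem_insert z S
  rw [← hAB] at hzS
  exact hzS.resolve_left fun hz => G.irrefl (hzA z hz)

theorem exists_ne_left_of_subset_singleton (hS : IsBiclique G S) (hAB : A ∪ B = S)
    (hP : IsCompleteBipartition G A B) (hP3 : ∀ u v, G.Adj u v → ∃ z, IsInducedP3 G z u v)
    {u v : V} (hu : u ∈ A) (hv : v ∈ B) (hB : B ⊆ {v}) : ∃ u' ∈ A, u' ≠ u := by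
  by_contra! hA
  obtain ⟨z, -, -, hzv, hzu, -, hzv'⟩ := hP3 u v (hP.adj u hu v hv)
  have hzB := hS.mem_right_of_forall_adj hAB hP (fun a ha => hA a ha ▸ hzu.symm)
    (fun b hb => (hB hb : b = v) ▸ fun h => hzv' h.symm)
  exact hzv (hB hzB)

theorem exists_ne_right_of_ne_left (hS : IsBiclique G S) (hAB : A ∪ B = S)
    (hP : IsCompleteBipartition G A B) (hfree : Gᶜ.CliqueFree 3)
    (hC4 : ∀ x m y, IsInducedP3 G x m y → ∃ z, IsInducedC4 G x m y z)
    {u u' v : V} (hu : u ∈ A) (hu' : u' ∈ A) (huu' : u ≠ u') (hv : v ∈ B) :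
    ∃ v' ∈ B, v' ≠ v := by
  classical
  by_contra! hB
  have hA : ∀ a ∈ A, a = u ∨ a = u' := by
    intro a ha
    by_contra! hne
    refine hfree {a, u, u'} (is3Clique_triple_iff.mpr ⟨?_, ?_, ?_⟩)
    exacts [(G.compl_adj a u).mpr ⟨hne.1, hP.left_indep a ha u hu⟩,
      (G.compl_adj a u').mpr ⟨hne.2, hP.left_indep a ha u' hu'⟩,
      (G.compl_adj u u').mpr ⟨huu', hP.left_indep u hu u' hu'⟩]
  have huv := hP.adj u hu v hv
  have hu'v := hP.adj u' hu' v hv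
  obtain ⟨z, -, -, -, -, hvz_ne, -, -, -, hu'z, hzu, -, hvz⟩ :=
    hC4 u v u' ⟨huv.ne, hu'v.ne.symm, huu', huv, hu'v.symm, hP.left_indep u hu u' hu'⟩
  have hzB := hS.mem_right_of_forall_adj hAB hP
    (fun a ha => (hA a ha).elim (fun h => h ▸ hzu.symm) (fun h => h ▸ hu'z))
    (fun b hb => hB b hb ▸ hvz)
  exact hvz_ne (hB z hzB).symm

theorem exists_isInducedC4_of_mem (hS : IsBiclique G S) (hAB : A ∪ B = S)
    (hP : IsCompleteBipartition G A B) (hfree : Gᶜ.CliqueFree 3)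
    (hP3 : ∀ u v, G.Adj u v → ∃ z, IsInducedP3 G z u v)
    (hC4 : ∀ x m y, IsInducedP3 G x m y → ∃ z, IsInducedC4 G x m y z)
    {u v : V} (hu : u ∈ A) (hv : v ∈ B) :
    ∃ a b c d, IsInducedC4 G a b c d ∧ {a, b, c, d} ⊆ S := by
  have hBA : B ∪ A = S := by rw [Set.union_comm, hAB]
  obtain ⟨u', hu', hu'u⟩ : ∃ u' ∈ A, u' ≠ u := by
    by_cases hB : B ⊆ {v}
    · exact hS.exists_ne_left_of_subset_singleton hAB hP hP3 hu hv hB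
    · obtain ⟨v', hv', hv'v⟩ := Set.not_subset.mp hB
      exact hS.exists_ne_right_of_ne_left hBA hP.symm hfree hC4 hv hv' (Ne.symm hv'v) hu
  obtain ⟨v', hv', hv'v⟩ := hS.exists_ne_right_of_ne_left hAB hP hfree hC4 hu hu' hu'u.symm hv
  refine ⟨u, v, u', v', ?_, ?_⟩
  · have huv := hP.adj u hu v hv
    have hu'v := hP.adj u' hu' v hv
    have huv' := hP.adj u hu v' hv'
    have hu'v' := hP.adj u' hu' v' hv'
    exact ⟨huv.ne, hu'u.symm, huv'.ne, hu'v.ne.symm, hv'v.symm, hu'v'.ne, huv, hu'v.symm, hu'v',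
      huv'.symm, hP.left_indep u hu u' hu', hP.right_indep v hv v' hv'⟩
  · rintro w (rfl | rfl | rfl | rfl)
    exacts [hAB ▸ Or.inl hu, hAB ▸ Or.inr hv, hAB ▸ Or.inl hu', hAB ▸ Or.inr hv']

theorem exists_isInducedC4 (hS : IsBiclique G S) (hfree : Gᶜ.CliqueFree 3)
    (hP3 : ∀ u v, G.Adj u v → ∃ z, IsInducedP3 G z u v)
    (hC4 : ∀ x m y, IsInducedP3 G x m y → ∃ z, IsInducedC4 G x m y z) :
    ∃ a b c d, IsInducedC4 G a b c d ∧ {a, b, c, d} ⊆ S := by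
  obtain ⟨A, B, hAB, hP⟩ := isCompleteBipartiteSet_iff.mp hS.1
  obtain ⟨u, hu, v, hv, huv⟩ := hS.2.1
  rw [← hAB] at hu hv
  rcases hu with hu | hu <;> rcases hv with hv | hv
  · exact absurd huv (hP.left_indep u hu v hv)
  · exact hS.exists_isInducedC4_of_mem hAB hP hfree hP3 hC4 hu hv
  · exact hS.exists_isInducedC4_of_mem (by rw [Set.union_comm, hAB]) hP.symm hfree hP3 hC4 hu hv
  · exact absurd huv (hP.right_indep u hu v hv)

end IsBiclique

theorem exists_isBiclique_of_adj [Finite V] {u v : V} (huv : G.Adj u v) :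
    ∃ S, IsBiclique G S := by
  have hedge : IsCompleteBipartiteSet G {u, v} :=
    ⟨{u}, {v}, rfl, Set.disjoint_singleton.mpr huv.ne, by simpa using huv,
      by simp, by simp⟩
  obtain ⟨M, ⟨hMuv, hM⟩, hmax⟩ :=
    (Set.toFinite {T : Set V | {u, v} ⊆ T ∧ IsCompleteBipartiteSet G T}).exists_maximal
      ⟨_, subset_rfl, hedge⟩
  refine ⟨M, hM, ⟨u, hMuv (by simp), v, hMuv (by simp), huv⟩, fun T hMT hT => ?_⟩
  exact (hmax ⟨hMuv.trans hMT, hT⟩ hMT).antisymm hMT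

theorem bicliqueColorable_of_equiv {α : Type*} {m : ℕ} (e : α ≃ Fin m) (c : V → α)
    (hc : ∀ S, IsBiclique G S → ¬ Monochromatic c S) : BicliqueColorable G m :=
  ⟨e ∘ c, fun S hS ⟨a, ha⟩ => hc S hS ⟨e.symm a, fun v hv => e.eq_symm_apply.mpr (ha v hv)⟩⟩

theorem bicliqueChromaticNumber_eq_two (h2 : BicliqueColorable G 2) {S : Set V}
    (hS : IsBiclique G S) : bicliqueChromaticNumber G = 2 := by
  refine le_antisymm (Nat.sInf_le h2) (le_csInf ⟨2, h2⟩ fun m ⟨c, hc⟩ => ?_)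
  by_contra! hm
  have : Subsingleton (Fin m) := Fin.subsingleton_iff_le_one.mpr (by omega)
  obtain ⟨u, hu, -⟩ := hS.2.1
  exact hc S hS ⟨c u, fun v _ => Subsingleton.elim _ _⟩

end SimpleGraph

namespace ZMod

lemma val_sub_add_val_eq {n : ℕ} [NeZero n] (a b : ZMod n) :
    (a - b).val + b.val = a.val ∨ (a - b).val + b.val = a.val + n := by
  have h := congrArg val (sub_add_cancel a b)
  by_cases hn : n ≤ (a - b).val + b.val
  · rw [val_add_of_le hn] at h; omega
  · rw [val_add_of_lt (not_le.mp hn)] at h; omega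

end ZMod

section CyclePower

variable {n k : ℕ}

theorem cyclePower_adj_iff [NeZero n] {a b : ZMod n} :
    (cyclePower n k).Adj a b ↔ a.val ≠ b.val ∧
      (a.val ≤ b.val + k ∧ b.val ≤ a.val + k ∨ a.val + n ≤ b.val + k ∨ b.val + n ≤ a.val + k) := by
  have hab := ZMod.val_sub_add_val_eq a b
  have hba := ZMod.val_sub_add_val_eq b a
  have := ZMod.val_lt (a - b); have := ZMod.val_lt (b - a)
  have := ZMod.val_lt a; have := ZMod.val_lt b
  simp only [cyclePower, fromRel_adj, cdist]
  rw [← (ZMod.val_injective n).ne_iff]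
  omega

theorem cyclePower_adj_add_left (x a b : ZMod n) :
    (cyclePower n k).Adj (x + a) (x + b) ↔ (cyclePower n k).Adj a b := by
  simp only [cyclePower, fromRel_adj, cdist, add_sub_add_left_eq_sub, ne_eq, add_right_inj]

theorem isInducedP3_cyclePower_add_left (x a b c : ZMod n) :
    IsInducedP3 (cyclePower n k) (x + a) (x + b) (x + c) ↔ IsInducedP3 (cyclePower n k) a b c := by
  simp only [IsInducedP3, cyclePower_adj_add_left, ne_eq, add_right_inj]

theorem isInducedC4_cyclePower_add_left (x a b c d : ZMod n) :
    IsInducedC4 (cyclePower n k) (x + a) (x + b) (x + c) (x + d) ↔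
      IsInducedC4 (cyclePower n k) a b c d := by
  simp only [IsInducedC4, cyclePower_adj_add_left, ne_eq, add_right_inj]

theorem cyclePower_exists_isInducedP3 (h1 : 2 * k + 2 ≤ n) {u v : ZMod n}
    (huv : (cyclePower n k).Adj u v) : ∃ z, IsInducedP3 (cyclePower n k) z u v := by
  have : NeZero n := ⟨by omega⟩
  obtain ⟨z, hz⟩ : ∃ z, IsInducedP3 (cyclePower n k) z 0 (v - u) := by
    have hd := (cyclePower_adj_add_left u 0 (v - u)).mp (by rwa [add_zero, add_sub_cancel])
    rw [cyclePower_adj_iff, ZMod.val_zero] at hd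
    have := ZMod.val_lt (v - u)
    -- go a distance `k + 1` from `v - u`, on the side away from `0`
    obtain ⟨z, hz⟩ : ∃ z : ZMod n, z.val =
        if (v - u).val ≤ k then n + (v - u).val - (k + 1) else (v - u).val + (k + 1) - n :=
      ⟨_, ZMod.val_cast_of_lt (by split_ifs <;> omega)⟩
    refine ⟨z, ?_⟩
    simp only [IsInducedP3, ne_eq, ← (ZMod.val_injective n).eq_iff, cyclePower_adj_iff,
      ZMod.val_zero, hz]
    split_ifs <;> omega
  refine ⟨u + z, ?_⟩
  rwa [← isInducedP3_cyclePower_add_left u, add_zero, add_sub_cancel] at hz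

theorem cyclePower_exists_isInducedC4 (h1 : 2 * k + 2 ≤ n) (h2 : n ≤ 3 * k + 1) {x m y : ZMod n}
    (hxmy : IsInducedP3 (cyclePower n k) x m y) :
    ∃ z, IsInducedC4 (cyclePower n k) x m y z := by
  have : NeZero n := ⟨by omega⟩
  obtain ⟨z, hz⟩ : ∃ z, IsInducedC4 (cyclePower n k) 0 (m - x) (y - x) z := by
    have h := (isInducedP3_cyclePower_add_left x 0 (m - x) (y - x)).mp
      (by rwa [add_zero, add_sub_cancel, add_sub_cancel])
    simp only [IsInducedP3, ne_eq, ← (ZMod.val_injective n).eq_iff, cyclePower_adj_iff,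
      ZMod.val_zero] at h
    have := ZMod.val_lt (m - x); have := ZMod.val_lt (y - x)
    -- a neighbour of `0` on the far side from `m - x`, just far enough to be out of reach of
    -- `m - x` and within reach of `y - x`
    obtain ⟨z, hz⟩ : ∃ z : ZMod n, z.val =
        if (m - x).val ≤ k then n - max (max (k + 1 - (m - x).val) (n - (y - x).val - k)) 1
        else max (k + 1 + (m - x).val - n) ((y - x).val - k) :=
      ⟨_, ZMod.val_cast_of_lt (by split_ifs <;> omega)⟩
    refine ⟨z, ?_⟩
    simp only [IsInducedC4, ne_eq, ← (ZMod.val_injective n).eq_iff, cyclePower_adj_iff,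
      ZMod.val_zero, hz]
    split_ifs <;> omega
  refine ⟨x + z, ?_⟩
  rwa [← isInducedC4_cyclePower_add_left x, add_zero, add_sub_cancel, add_sub_cancel] at hz

theorem cyclePower_compl_cliqueFree_three [NeZero n] (h2 : n ≤ 3 * k + 1) :
    (cyclePower n k)ᶜ.CliqueFree 3 := by
  intro s hs
  obtain ⟨a, b, c, hab, hac, hbc, -⟩ := is3Clique_iff.mp hs
  simp only [compl_adj, ne_eq, ← (ZMod.val_injective n).eq_iff, cyclePower_adj_iff] at hab hac hbc
  have := ZMod.val_lt a; have := ZMod.val_lt b; have := ZMod.val_lt c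
  omega

theorem cyclePower_not_monochromatic_of_isInducedC4 [NeZero n] (h2 : n ≤ 3 * k + 1)
    {a b c d : ZMod n} (h : IsInducedC4 (cyclePower n k) a b c d) :
    ¬ Monochromatic (fun i : ZMod n => decide (i.val < k)) {a, b, c, d} := by
  rintro ⟨col, hcol⟩
  have ha := hcol a (by simp); have hb := hcol b (by simp)
  have hc := hcol c (by simp); have hd := hcol d (by simp)
  simp only [IsInducedC4, ne_eq, ← (ZMod.val_injective n).eq_iff, cyclePower_adj_iff] at h
  have := ZMod.val_lt a; have := ZMod.val_lt b; have := ZMod.val_lt c; have := ZMod.val_lt d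
  cases col <;> simp only [decide_eq_true_eq, decide_eq_false_iff_not] at ha hb hc hd <;> omega

end CyclePower

/-- `C_n^k` with `2k + 2 ≤ n ≤ 3k + 1` has biclique-chromatic number exactly 2;
colouring a block of `k` consecutive vertices with one colour and the remaining
`n - k` vertices with the other leaves no biclique monochromatic. -/
theorem stmt_12 (n k : ℕ) (h1 : 2 * k + 2 ≤ n) (h2 : n ≤ 3 * k + 1) :
    bicliqueChromaticNumber (cyclePower n k) = 2 ∧
    (∀ S : Set (ZMod n), IsBiclique (cyclePower n k) S →
      ¬ Monochromatic (fun i : ZMod n => decide (i.val < k)) S) := by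
  have : NeZero n := ⟨by omega⟩
  have : Fact (1 < n) := ⟨by omega⟩
  have hblock : ∀ S : Set (ZMod n), IsBiclique (cyclePower n k) S →
      ¬ Monochromatic (fun i : ZMod n => decide (i.val < k)) S := by
    intro S hS hmono
    obtain ⟨a, b, c, d, hC4, hsub⟩ :=
      hS.exists_isInducedC4 (cyclePower_compl_cliqueFree_three h2)
        (fun _ _ => cyclePower_exists_isInducedP3 h1)
        (fun _ _ _ => cyclePower_exists_isInducedC4 h1 h2)
    exact cyclePower_not_monochromatic_of_isInducedC4 h2 hC4 (hmono.mono hsub)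
  have h01 : (cyclePower n k).Adj 0 1 := by
    rw [cyclePower_adj_iff, ZMod.val_zero, ZMod.val_one]
    omega
  obtain ⟨S, hS⟩ := exists_isBiclique_of_adj h01
  exact ⟨bicliqueChromaticNumber_eq_two (bicliqueColorable_of_equiv finTwoEquiv.symm _ hblock) hS,
    hblock⟩
end
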